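/- arXiv:1909.03866 — 5 statements merged into one kernel-verified Lean document; each statement's English description precedes it below -/
import Mathlib

section
/- Let X be a nonnegative real random variable with finite expectation. Then there exists an increasing, positive, concave function φ : [0,∞) → (0,∞) with φ(t) → ∞ as t → ∞, such that E[Φ(X)] < ∞, where Φ(t) = ∫₀ᵗ φ(x) dx. -/
/-!
Take `φ s = 1 + ∑ₙ min (s / cₙ) 1`, a sum of concave nondecreasing ramps; it is concave and
strictly increasing, and tends to infinity because every ramp eventually equals `1`. As `φ` is
monotone, `Φ(x) ≤ x φ(x)`, so it suffices that `∑ₙ E[X min (X / cₙ) 1] < ∞`. By dominated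
convergence `E[X min (X / c) 1] → 0` as `c → ∞`, so `cₙ ≥ 2ⁿ` can be chosen with this expectation
below `2⁻ⁿ`; `cₙ ≥ 2ⁿ` also makes the series defining `φ` converge.
-/

open MeasureTheory Filter Topology

theorem ConcaveOn.tsum {ι E : Type*} [AddCommMonoid E] [Module ℝ E] {s : Set E}
    {f : ι → E → ℝ} (hs : Convex ℝ s) (hf : ∀ i, ConcaveOn ℝ s (f i))
    (hsum : ∀ x ∈ s, Summable (f · x)) :
    ConcaveOn ℝ s (fun x => ∑' i, f i x) := by
  refine ⟨hs, fun x hx y hy a b ha hb hab => ?_⟩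
  have hx' := (hsum x hx).mul_left a
  have hy' := (hsum y hy).mul_left b
  simp only [smul_eq_mul]
  rw [← (hsum x hx).tsum_mul_left, ← (hsum y hy).tsum_mul_left, ← hx'.tsum_add hy']
  exact (hx'.add hy').tsum_le_tsum (fun i => (hf i).2 hx hy ha hb hab)
    (hsum _ (hs hx hy ha hb hab))

theorem Filter.tendsto_atTop_of_summable_inv {c : ℕ → ℝ} (hc0 : ∀ n, 0 < c n)
    (hc : Summable fun n => (c n)⁻¹) : Tendsto c atTop atTop := by
  have h : Tendsto (fun n => (c n)⁻¹) atTop (nhdsWithin 0 (Set.Ioi 0)) :=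
    tendsto_nhdsWithin_iff.2
      ⟨hc.tendsto_atTop_zero, Eventually.of_forall fun n => inv_pos.2 (hc0 n)⟩
  exact h.inv_tendsto_nhdsGT_zero.congr fun n => inv_inv (c n)

theorem MeasureTheory.integrable_tsum_of_nonneg {α ι : Type*} [MeasurableSpace α] [Countable ι]
    {μ : Measure α} {F : ι → α → ℝ} (hF : ∀ i, Integrable (F i) μ) (hF0 : ∀ i, 0 ≤ F i)
    (hsum : Summable fun i => ∫ a, F i a ∂μ) :
    Integrable (fun a => ∑' i, F i a) μ := by
  have htoReal : (fun a => ∑' i, F i a) = fun a => (∑' i, ENNReal.ofReal (F i a)).toReal := by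
    ext a
    rw [ENNReal.tsum_toReal_eq fun _ => ENNReal.ofReal_ne_top]
    simp only [ENNReal.toReal_ofReal (hF0 _ a)]
  rw [htoReal]
  refine integrable_toReal_of_lintegral_ne_top
    (AEMeasurable.tsum fun i => (hF i).aemeasurable.ennreal_ofReal) ?_
  rw [lintegral_tsum fun i => (hF i).aemeasurable.ennreal_ofReal]
  simp_rw [← ofReal_integral_eq_lintegral_ofReal (hF _) (Eventually.of_forall (hF0 _))]
  rw [← ENNReal.ofReal_tsum_of_nonneg (fun i => integral_nonneg (hF0 i)) hsum]
  exact ENNReal.ofReal_ne_top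

theorem intervalIntegral_le_mul_of_monotone {φ : ℝ → ℝ} (hφ : Monotone φ) {x : ℝ} (hx : 0 ≤ x) :
    ∫ y in (0 : ℝ)..x, φ y ≤ x * φ x := by
  calc ∫ y in (0 : ℝ)..x, φ y
      ≤ ∫ _ in (0 : ℝ)..x, φ x :=
        intervalIntegral.integral_mono_on hx hφ.intervalIntegrable intervalIntegrable_const
          fun y hy => hφ hy.2
    _ = x * φ x := by simp

theorem min_div_one_nonneg {x c : ℝ} (hx : 0 ≤ x) (hc : 0 ≤ c) : 0 ≤ min (x / c) 1 :=
  le_min (div_nonneg hx hc) zero_le_one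

theorem norm_mul_min_div_one_le {x c : ℝ} (hx : 0 ≤ x) (hc : 0 ≤ c) :
    ‖x * min (x / c) 1‖ ≤ x := by
  rw [Real.norm_of_nonneg (mul_nonneg hx (min_div_one_nonneg hx hc))]
  exact mul_le_of_le_one_right hx (min_le_right _ _)

noncomputable def rampSum (c : ℕ → ℝ) (s : ℝ) : ℝ := 1 + ∑' n, min (s / c n) 1

section rampSum

variable {c : ℕ → ℝ}

theorem summable_min_div_one (hc : Summable fun n => (c n)⁻¹) (s : ℝ) :
    Summable fun n => min (s / c n) 1 := by
  refine (hc.abs.mul_left |s|).of_norm_bounded fun n => ?_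
  rw [Real.norm_eq_abs, ← abs_mul, ← div_eq_mul_inv]
  rcases le_total (s / c n) 1 with h | h
  · rw [min_eq_left h]
  · rw [min_eq_right h, abs_one]
    exact h.trans (le_abs_self _)

theorem concaveOn_rampSum (hc : Summable fun n => (c n)⁻¹) :
    ConcaveOn ℝ Set.univ (rampSum c) := by
  refine (concaveOn_const 1 convex_univ).add (ConcaveOn.tsum convex_univ (fun n => ?_)
    fun s _ => summable_min_div_one hc s)
  refine (((LinearMap.lsmul ℝ ℝ (c n)⁻¹).concaveOn convex_univ).inf
    (concaveOn_const 1 convex_univ)).congr fun s _ => ?_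
  simp [div_eq_inv_mul]

theorem strictMono_rampSum (hc0 : ∀ n, 0 < c n) (hc : Summable fun n => (c n)⁻¹) :
    StrictMono (rampSum c) := by
  intro s s' hss'
  obtain ⟨n, hn⟩ := ((tendsto_atTop_of_summable_inv hc0 hc).eventually_gt_atTop s).exists
  have hmono : ∀ m, min (s / c m) 1 ≤ min (s' / c m) 1 := fun m =>
    min_le_min_right 1 (div_le_div_of_nonneg_right hss'.le (hc0 m).le)
  have hlt : min (s / c n) 1 < min (s' / c n) 1 := by
    rw [min_eq_left ((div_lt_one (hc0 n)).2 hn).le]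
    exact lt_min (div_lt_div_of_pos_right hss' (hc0 n)) ((div_lt_one (hc0 n)).2 hn)
  exact (add_lt_add_iff_left 1).2 ((summable_min_div_one hc s).tsum_lt_tsum hmono hlt
    (summable_min_div_one hc s'))

theorem one_le_rampSum (hc0 : ∀ n, 0 < c n) {s : ℝ} (hs : 0 ≤ s) : 1 ≤ rampSum c s :=
  le_add_of_nonneg_right (tsum_nonneg fun n => min_div_one_nonneg hs (hc0 n).le)

theorem tendsto_rampSum_atTop (hc0 : ∀ n, 0 < c n) (hc : Summable fun n => (c n)⁻¹) :
    Tendsto (rampSum c) atTop atTop := by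
  refine tendsto_atTop_atTop.2 fun b => ⟨∑ n ∈ Finset.range ⌈b⌉₊, c n, fun s hs => ?_⟩
  have hs0 : 0 ≤ s := (Finset.sum_nonneg fun n _ => (hc0 n).le).trans hs
  have hterm : ∀ n ∈ Finset.range ⌈b⌉₊, min (s / c n) 1 = 1 := fun n hn =>
    min_eq_right ((one_le_div (hc0 n)).2
      ((Finset.single_le_sum (fun m _ => (hc0 m).le) hn).trans hs))
  calc b ≤ ⌈b⌉₊ := Nat.le_ceil b
    _ = ∑ n ∈ Finset.range ⌈b⌉₊, min (s / c n) 1 := by simp [Finset.sum_congr rfl hterm]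
    _ ≤ ∑' n, min (s / c n) 1 := (summable_min_div_one hc s).sum_le_tsum _
        fun n _ => min_div_one_nonneg hs0 (hc0 n).le
    _ ≤ rampSum c s := le_add_of_nonneg_left zero_le_one

end rampSum

section Integrability

variable {α : Type*} [MeasurableSpace α] {μ : Measure α} {X : α → ℝ}

theorem MeasureTheory.Integrable.intervalIntegral_comp {φ : ℝ → ℝ} (hφ : Monotone φ)
    (hφ0 : ∀ s, 0 ≤ s → 0 ≤ φ s) (hX0 : ∀ a, 0 ≤ X a) (hX : AEStronglyMeasurable X μ)
    (hXφ : Integrable (fun a => X a * φ (X a)) μ) :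
    Integrable (fun a => ∫ y in (0 : ℝ)..X a, φ y) μ := by
  refine hXφ.mono' ((intervalIntegral.continuous_primitive (fun _ _ => hφ.intervalIntegrable)
    0).comp_aestronglyMeasurable hX) (Eventually.of_forall fun a => ?_)
  rw [Real.norm_of_nonneg (intervalIntegral.integral_nonneg (hX0 a) fun y hy => hφ0 y hy.1)]
  exact intervalIntegral_le_mul_of_monotone hφ (hX0 a)

theorem MeasureTheory.Integrable.mul_min_div_one (hX0 : ∀ a, 0 ≤ X a) (hX : Integrable X μ)
    {c : ℝ} (hc : 0 ≤ c) : Integrable (fun a => X a * min (X a / c) 1) μ :=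
  hX.mono' ((by fun_prop : Continuous fun x : ℝ => x * min (x / c) 1)
    |>.comp_aestronglyMeasurable hX.aestronglyMeasurable)
    (Eventually.of_forall fun a => norm_mul_min_div_one_le (hX0 a) hc)

theorem tendsto_integral_mul_min_div_one_atTop (hX0 : ∀ a, 0 ≤ X a) (hX : Integrable X μ) :
    Tendsto (fun c : ℝ => ∫ a, X a * min (X a / c) 1 ∂μ) atTop (𝓝 0) := by
  have hlim : ∀ a, Tendsto (fun c : ℝ => X a * min (X a / c) 1) atTop (𝓝 0) := fun a => by
    simpa using tendsto_const_nhds.mul ((tendsto_const_nhds.div_atTop tendsto_id).min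
      (tendsto_const_nhds (x := (1 : ℝ))))
  simpa using tendsto_integral_filter_of_dominated_convergence X
    ((eventually_ge_atTop 0).mono fun c hc => (hX.mul_min_div_one hX0 hc).aestronglyMeasurable)
    ((eventually_ge_atTop 0).mono fun c hc =>
      Eventually.of_forall fun a => norm_mul_min_div_one_le (hX0 a) hc)
    hX (Eventually.of_forall hlim)

theorem exists_summable_integral_mul_min_div_one (hX0 : ∀ a, 0 ≤ X a) (hX : Integrable X μ) :
    ∃ c : ℕ → ℝ, (∀ n, 0 < c n) ∧ Summable (fun n => (c n)⁻¹) ∧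
      Summable fun n => ∫ a, X a * min (X a / c n) 1 ∂μ := by
  have hev : ∀ n : ℕ, ∀ᶠ c in atTop,
      (2 : ℝ) ^ n ≤ c ∧ ∫ a, X a * min (X a / c) 1 ∂μ < (1 / 2) ^ n := fun n =>
    (eventually_ge_atTop _).and ((tendsto_integral_mul_min_div_one_atTop hX0 hX).eventually
      (gt_mem_nhds (by positivity)))
  choose c hc using fun n => (hev n).exists
  have hc0 : ∀ n, 0 < c n := fun n => (pow_pos two_pos n).trans_le (hc n).1
  refine ⟨c, hc0, ?_, ?_⟩
  · refine summable_geometric_two.of_nonneg_of_le (fun n => (inv_pos.2 (hc0 n)).le) fun n => ?_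
    rw [one_div_pow, one_div]
    exact inv_anti₀ (pow_pos two_pos n) (hc n).1
  · exact summable_geometric_two.of_nonneg_of_le
      (fun n => integral_nonneg fun a =>
        mul_nonneg (hX0 a) (min_div_one_nonneg (hX0 a) (hc0 n).le))
      fun n => (hc n).2.le

theorem integrable_mul_rampSum (hX0 : ∀ a, 0 ≤ X a) (hX : Integrable X μ) {c : ℕ → ℝ}
    (hc0 : ∀ n, 0 < c n) (hsum : Summable fun n => ∫ a, X a * min (X a / c n) 1 ∂μ) :
    Integrable (fun a => X a * rampSum c (X a)) μ := by
  have h : (fun a => X a * rampSum c (X a)) = fun a => X a + ∑' n, X a * min (X a / c n) 1 := by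
    ext a; rw [rampSum, mul_add, mul_one, tsum_mul_left]
  rw [h]
  exact hX.add (integrable_tsum_of_nonneg (fun n => hX.mul_min_div_one hX0 (hc0 n).le)
    (fun n a => mul_nonneg (hX0 a) (min_div_one_nonneg (hX0 a) (hc0 n).le)) hsum)

end Integrability

theorem stmt0_general {Ω : Type*} [MeasurableSpace Ω] (μ : Measure Ω)
    (X : Ω → ℝ) (hXnn : ∀ ω, 0 ≤ X ω)
    (hXint : Integrable X μ) :
    ∃ φ : ℝ → ℝ,
      StrictMonoOn φ (Set.Ici 0) ∧
      (∀ t ∈ Set.Ici (0 : ℝ), 0 < φ t) ∧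
      ConcaveOn ℝ (Set.Ici 0) φ ∧
      Tendsto φ atTop atTop ∧
      Integrable (fun ω => ∫ x in (0 : ℝ)..(X ω), φ x) μ := by
  obtain ⟨c, hc0, hc, hsum⟩ := exists_summable_integral_mul_min_div_one hXnn hXint
  have hφ := strictMono_rampSum hc0 hc
  have hφ1 : ∀ s, 0 ≤ s → 1 ≤ rampSum c s := fun s hs => one_le_rampSum hc0 hs
  refine ⟨rampSum c, hφ.strictMonoOn _, fun s hs => one_pos.trans_le (hφ1 s hs),
    (concaveOn_rampSum hc).subset (Set.subset_univ _) (convex_Ici 0),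
    tendsto_rampSum_atTop hc0 hc, ?_⟩
  exact (integrable_mul_rampSum hXnn hXint hc0 hsum).intervalIntegral_comp hφ.monotone
    (fun s hs => zero_le_one.trans (hφ1 s hs)) hXnn hXint.aestronglyMeasurable

/-- Lemma: for a nonnegative integrable random variable `X`, there exists an increasing,
positive, concave function `φ` tending to infinity such that `E[Φ(X)] < ∞`, where
`Φ(t) = ∫₀ᵗ φ(x) dx`. -/
theorem stmt0 {Ω : Type*} [MeasurableSpace Ω] (μ : Measure Ω) [IsProbabilityMeasure μ]
    (X : Ω → ℝ) (hXnn : ∀ ω, 0 ≤ X ω) (hXmeas : Measurable X)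
    (hXint : Integrable X μ) :
    ∃ φ : ℝ → ℝ,
      StrictMonoOn φ (Set.Ici 0) ∧
      (∀ t ∈ Set.Ici (0 : ℝ), 0 < φ t) ∧
      ConcaveOn ℝ (Set.Ici 0) φ ∧
      Tendsto φ atTop atTop ∧
      Integrable (fun ω => ∫ x in (0 : ℝ)..(X ω), φ x) μ :=
  stmt0_general μ X hXnn hXint
end

section
/- Let φ : [0,∞) → (0,∞) be a non-decreasing, positive, concave function and let Φ(x) = ∫₀ˣ φ(t) dt. There exists a constant C_φ > 0 such that for every p ∈ (0,1], if X is a geometric random variable with success probability p (counting the number of failures before the first success), then (1/2)·Φ(1/p) ≤ (1/2)·(1/p)·φ(1/p) ≤ E[Φ(1+X)] ≤ C_φ·(1/p)·φ(1/p) ≤ 2C_φ·Φ(1/p). -/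
/-!
Write `Φ(y) = ∫₀ʸ φ` and `m = 1/p = E[1+X]`. Since `φ` is non-decreasing, `Φ` is convex with
`Φ(b) ≤ b φ(b)`; concavity and `φ(0) ≥ 0` make `φ(t)/t` non-increasing, which gives
`b φ(b) / 2 ≤ Φ(b)` and the linear growth bound `φ(y) ≤ φ(m) (1 + y/m)`.
The lower bound on `E[Φ(1+X)]` is Jensen's inequality through the supporting line of `Φ` at
`m`; the upper bound follows from `Φ(y) ≤ φ(m) (y + y²/m)` and `E[(1+X)²] = (2-p)/p²`,
with `C_φ = 3`.
-/

open MeasureTheory ProbabilityTheory Filter Set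

section Primitive

variable {φ : ℝ → ℝ}

lemma intervalIntegrable_of_monotoneOn_Ici (hmono : MonotoneOn φ (Ici 0)) {a b : ℝ}
    (ha : 0 ≤ a) (hb : 0 ≤ b) : IntervalIntegrable φ volume a b :=
  (hmono.mono fun _ hx ↦ le_trans (le_min ha hb) hx.1).intervalIntegrable

lemma integral_le_mul_of_monotoneOn (hmono : MonotoneOn φ (Ici 0)) {b : ℝ} (hb : 0 ≤ b) :
    ∫ x in (0:ℝ)..b, φ x ≤ b * φ b := by
  simpa using intervalIntegral.integral_mono_on hb
    (intervalIntegrable_of_monotoneOn_Ici hmono le_rfl hb) intervalIntegrable_const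
    fun x hx ↦ hmono hx.1 hb hx.2

lemma integral_add_mul_sub_le_of_monotoneOn (hmono : MonotoneOn φ (Ici 0)) {m y : ℝ}
    (hm : 0 ≤ m) (hy : 0 ≤ y) :
    (∫ x in (0:ℝ)..m, φ x) + φ m * (y - m) ≤ ∫ x in (0:ℝ)..y, φ x := by
  rw [← intervalIntegral.integral_add_adjacent_intervals
    (intervalIntegrable_of_monotoneOn_Ici hmono le_rfl hm)
    (intervalIntegrable_of_monotoneOn_Ici hmono hm hy), add_le_add_iff_left]
  rcases le_total m y with hmy | hym
  · simpa [mul_comm] using intervalIntegral.integral_mono_on hmy intervalIntegrable_const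
      (intervalIntegrable_of_monotoneOn_Ici hmono hm hy)
      fun x hx ↦ hmono hm (hm.trans hx.1) hx.1
  · have := intervalIntegral.integral_mono_on hym
      (intervalIntegrable_of_monotoneOn_Ici hmono hy hm) intervalIntegrable_const
      fun x hx ↦ hmono (hy.trans hx.1) hm hx.2
    rw [intervalIntegral.integral_symm]
    simp only [intervalIntegral.integral_const, smul_eq_mul] at this
    linarith

lemma ConcaveOn.mul_le_comp_mul (hconc : ConcaveOn ℝ (Ici 0) φ) (h0 : 0 ≤ φ 0) {t x : ℝ}
    (ht0 : 0 ≤ t) (ht1 : t ≤ 1) (hx : 0 ≤ x) : t * φ x ≤ φ (t * x) := by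
  have h := hconc.2 self_mem_Ici (mem_Ici.2 hx) (sub_nonneg.2 ht1) ht0 (sub_add_cancel 1 t)
  simp only [smul_eq_mul, mul_zero, zero_add] at h
  nlinarith [mul_nonneg (sub_nonneg.2 ht1) h0]

lemma half_mul_le_integral_of_concaveOn (hmono : MonotoneOn φ (Ici 0))
    (hconc : ConcaveOn ℝ (Ici 0) φ) (h0 : 0 ≤ φ 0) {b : ℝ} (hb : 0 ≤ b) :
    b / 2 * φ b ≤ ∫ x in (0:ℝ)..b, φ x := by
  rcases hb.eq_or_lt with rfl | hb
  · simp
  have hchord : ∀ x ∈ Icc 0 b, x / b * φ b ≤ φ x := fun x hx ↦ by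
    simpa [div_mul_cancel₀ x hb.ne'] using hconc.mul_le_comp_mul h0 (div_nonneg hx.1 hb.le)
      ((div_le_one hb).2 hx.2) hb.le
  have h := intervalIntegral.integral_mono_on hb.le
    (Continuous.intervalIntegrable (by fun_prop) _ _)
    (intervalIntegrable_of_monotoneOn_Ici hmono le_rfl hb.le) hchord
  have hint : ∫ x in (0:ℝ)..b, x / b * φ b = b / 2 * φ b := by
    simp only [div_mul_eq_mul_div, intervalIntegral.integral_div,
      intervalIntegral.integral_mul_const, integral_id]
    field_simp
    ring
  linarith

lemma le_mul_one_add_div_of_concaveOn (hmono : MonotoneOn φ (Ici 0))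
    (hconc : ConcaveOn ℝ (Ici 0) φ) (h0 : 0 ≤ φ 0) {m y : ℝ} (hm : 0 < m) (hy : 0 ≤ y) :
    φ y ≤ φ m * (1 + y / m) := by
  have hφm : 0 ≤ φ m := h0.trans (hmono self_mem_Ici hm.le hm.le)
  rcases le_total y m with hym | hmy
  · nlinarith [hmono hy hm.le hym, div_nonneg hy hm.le]
  · have hy' : 0 < y := hm.trans_le hmy
    have h := hconc.mul_le_comp_mul h0 (div_nonneg hm.le hy) ((div_le_one hy').2 hmy) hy
    rw [div_mul_cancel₀ m hy'.ne', div_mul_eq_mul_div, div_le_iff₀ hy'] at h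
    have : φ y ≤ φ m * (y / m) := by rw [mul_div_assoc', le_div_iff₀ hm]; linarith
    nlinarith

lemma integral_le_of_concaveOn (hmono : MonotoneOn φ (Ici 0))
    (hconc : ConcaveOn ℝ (Ici 0) φ) (h0 : 0 ≤ φ 0) {m y : ℝ} (hm : 0 < m) (hy : 0 ≤ y) :
    ∫ x in (0:ℝ)..y, φ x ≤ φ m * (y + y ^ 2 / m) :=
  calc ∫ x in (0:ℝ)..y, φ x ≤ y * φ y := integral_le_mul_of_monotoneOn hmono hy
    _ ≤ y * (φ m * (1 + y / m)) := by
      gcongr; exact le_mul_one_add_div_of_concaveOn hmono hconc h0 hm hy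
    _ = φ m * (y + y ^ 2 / m) := by ring

end Primitive

section Geometric

variable {p : ℝ}

lemma norm_one_sub_lt_one (hp0 : 0 < p) (hp2 : p < 2) : ‖1 - p‖ < 1 := by
  rw [Real.norm_eq_abs, abs_lt]; constructor <;> linarith

lemma hasSum_geometric_weight (hp0 : 0 < p) (hp2 : p < 2) :
    HasSum (fun k : ℕ ↦ (1 - p) ^ k * p) 1 := by
  have h := (hasSum_geometric_of_norm_lt_one (norm_one_sub_lt_one hp0 hp2)).mul_right p
  rwa [sub_sub_cancel, inv_mul_cancel₀ hp0.ne'] at h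

lemma hasSum_geometric_mean (hp0 : 0 < p) (hp2 : p < 2) :
    HasSum (fun k : ℕ ↦ (1 - p) ^ k * p * (1 + k)) (1 / p) := by
  have h := (hasSum_geometric_weight hp0 hp2).add
    ((hasSum_coe_mul_geometric_of_norm_lt_one (norm_one_sub_lt_one hp0 hp2)).mul_left p)
  have hterm : ∀ k : ℕ, (1 - p) ^ k * p + p * (k * (1 - p) ^ k) = (1 - p) ^ k * p * (1 + k) :=
    fun k ↦ by ring
  have hsum : 1 + p * ((1 - p) / p ^ 2) = 1 / p := by
    field_simp
    ring
  rw [sub_sub_cancel] at h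
  simpa only [hterm, hsum] using h

lemma hasSum_geometric_second_moment (hp0 : 0 < p) (hp2 : p < 2) :
    HasSum (fun k : ℕ ↦ (1 - p) ^ k * p * (1 + k) ^ 2) ((2 - p) / p ^ 2) := by
  have h := ((hasSum_choose_mul_geometric_of_norm_lt_one 2 (norm_one_sub_lt_one hp0 hp2)).mul_left
    (2 * p)).sub (hasSum_geometric_mean hp0 hp2)
  have hterm : ∀ k : ℕ,
      2 * p * (((k + 2).choose 2 : ℕ) * (1 - p) ^ k) - (1 - p) ^ k * p * (1 + k)
        = (1 - p) ^ k * p * (1 + k) ^ 2 := fun k ↦ by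
    rw [Nat.cast_choose_two]
    push_cast
    ring
  have hsum : 2 * p * (1 / p ^ (2 + 1)) - 1 / p = (2 - p) / p ^ 2 := by
    field_simp
    ring
  rw [sub_sub_cancel] at h
  simpa only [hterm, hsum] using h

lemma hasSum_geometric_affine (hp0 : 0 < p) (hp2 : p < 2) (a b : ℝ) :
    HasSum (fun k : ℕ ↦ (1 - p) ^ k * p * (a + b * ((1 + k) - 1 / p))) a := by
  have h := ((hasSum_geometric_weight hp0 hp2).mul_left (a - b / p)).add
    ((hasSum_geometric_mean hp0 hp2).mul_left b)
  rw [show (a - b / p) * 1 + b * (1 / p) = a by ring] at h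
  exact h.congr_fun fun k ↦ by ring

lemma hasSum_geometric_add_sq_div (hp0 : 0 < p) (hp2 : p < 2) (b : ℝ) :
    HasSum (fun k : ℕ ↦ (1 - p) ^ k * p * (b * ((1 + k) + (1 + k) ^ 2 / (1 / p))))
      (3 * (1 / p * b) - b) := by
  have h := ((hasSum_geometric_mean hp0 hp2).mul_left b).add
    ((hasSum_geometric_second_moment hp0 hp2).mul_left (b * p))
  rw [show b * (1 / p) + b * p * ((2 - p) / p ^ 2) = 3 * (1 / p * b) - b by
    field_simp; ring] at h
  exact h.congr_fun fun k ↦ by field_simp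

lemma map_eq_geometricMeasure {Ω : Type*} [MeasurableSpace Ω] {μ : Measure Ω} {X : Ω → ℕ}
    (hX : Measurable X) (hp0 : 0 < p) (hp1 : p ≤ 1)
    (hlaw : ∀ k : ℕ, μ {ω | X ω = k} = ENNReal.ofReal (p * (1 - p) ^ k)) :
    μ.map X = geometricMeasure ⟨p, hp0.le, hp1⟩ := by
  refine Measure.ext_of_singleton fun k ↦ ?_
  rw [Measure.map_apply hX (measurableSet_singleton k), geometricMeasure_singleton
    (Subtype.coe_ne_coe.1 hp0.ne'), mul_comm]
  exact hlaw k

lemma integral_comp_eq_tsum_of_geometric {Ω : Type*} [MeasurableSpace Ω] {μ : Measure Ω}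
    {X : Ω → ℕ} {E : Type*} [NormedAddCommGroup E] [NormedSpace ℝ E]
    [FiniteDimensional ℝ E]
    (hX : Measurable X) (hp0 : 0 < p) (hp1 : p ≤ 1)
    (hlaw : ∀ k : ℕ, μ {ω | X ω = k} = ENNReal.ofReal (p * (1 - p) ^ k)) (g : ℕ → E) :
    ∫ ω, g (X ω) ∂μ = ∑' k : ℕ, ((1 - p) ^ k * p) • g k := by
  rw [← integral_map hX.aemeasurable StronglyMeasurable.of_discrete.aestronglyMeasurable,
    map_eq_geometricMeasure hX hp0 hp1 hlaw,
    integral_geometricMeasure (Subtype.coe_ne_coe.1 hp0.ne')]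

end Geometric

lemma tsum_mul_mem_Icc_of_hasSum {ι : Type*} {w g l u : ι → ℝ} {L U : ℝ} (hw : ∀ k, 0 ≤ w k)
    (hg : ∀ k, 0 ≤ g k) (hl : ∀ k, l k ≤ g k) (hu : ∀ k, g k ≤ u k)
    (hL : HasSum (fun k ↦ w k * l k) L) (hU : HasSum (fun k ↦ w k * u k) U) :
    ∑' k, w k * g k ∈ Icc L U := by
  have hwg : Summable fun k ↦ w k * g k :=
    hU.summable.of_nonneg_of_le (fun k ↦ mul_nonneg (hw k) (hg k))
      fun k ↦ mul_le_mul_of_nonneg_left (hu k) (hw k)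
  exact ⟨hasSum_le (fun k ↦ mul_le_mul_of_nonneg_left (hl k) (hw k)) hL hwg.hasSum,
    hasSum_le (fun k ↦ mul_le_mul_of_nonneg_left (hu k) (hw k)) hwg.hasSum hU⟩

/-- For a non-decreasing, positive, concave `φ` on `[0,∞)` with primitive `Φ`, there is a
constant `C_φ > 0` such that for every `p ∈ (0,1]` and every geometric random variable `X`
of parameter `p` (number of failures before first success),
`(1/2)Φ(1/p) ≤ (1/2)(1/p)φ(1/p) ≤ E[Φ(1+X)] ≤ C_φ (1/p) φ(1/p) ≤ 2 C_φ Φ(1/p)`. -/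
theorem stmt1 (φ : ℝ → ℝ)
    (hmono : MonotoneOn φ (Set.Ici 0))
    (hpos : ∀ t ∈ Set.Ici (0 : ℝ), 0 < φ t)
    (hconc : ConcaveOn ℝ (Set.Ici 0) φ) :
    ∃ C : ℝ, 0 < C ∧
      ∀ (p : ℝ), 0 < p → p ≤ 1 →
      ∀ (Ω : Type) (_ : MeasurableSpace Ω) (μ : Measure Ω) (_ : IsProbabilityMeasure μ)
        (X : Ω → ℕ) (_ : Measurable X),
        (∀ k : ℕ, μ {ω | X ω = k} = ENNReal.ofReal (p * (1 - p) ^ k)) →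
        (1/2) * (∫ x in (0:ℝ)..(1/p), φ x) ≤ (1/2) * (1/p) * φ (1/p) ∧
        (1/2) * (1/p) * φ (1/p) ≤ (∫ ω, (∫ x in (0:ℝ)..(1 + (X ω : ℝ)), φ x) ∂μ) ∧
        (∫ ω, (∫ x in (0:ℝ)..(1 + (X ω : ℝ)), φ x) ∂μ) ≤ C * ((1/p) * φ (1/p)) ∧
        C * ((1/p) * φ (1/p)) ≤ 2 * C * (∫ x in (0:ℝ)..(1/p), φ x) := by
  refine ⟨3, by norm_num, fun p hp0 hp1 Ω _ μ _ X hX hlaw ↦ ?_⟩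
  have hp2 : p < 2 := by linarith
  have hm : 0 < 1 / p := by positivity
  have hφ : ∀ t, 0 ≤ t → 0 ≤ φ t := fun t ht ↦ (hpos t ht).le
  have hφm := hφ (1 / p) hm.le
  have hΦm_le := integral_le_mul_of_monotoneOn hmono hm.le
  have hle_Φm := half_mul_le_integral_of_concaveOn hmono hconc (hφ 0 le_rfl) hm.le
  obtain ⟨hlower, hupper⟩ := tsum_mul_mem_Icc_of_hasSum
    (g := fun k : ℕ ↦ ∫ x in (0:ℝ)..(1 + k), φ x)
    (fun k ↦ mul_nonneg (pow_nonneg (by linarith) k) hp0.le)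
    (fun k ↦ intervalIntegral.integral_nonneg (by positivity) fun t ht ↦ hφ t ht.1)
    (fun k ↦ integral_add_mul_sub_le_of_monotoneOn hmono hm.le (by positivity))
    (fun k ↦ integral_le_of_concaveOn hmono hconc (hφ 0 le_rfl) hm (by positivity))
    (hasSum_geometric_affine hp0 hp2 _ _) (hasSum_geometric_add_sq_div hp0 hp2 _)
  have hE := integral_comp_eq_tsum_of_geometric hX hp0 hp1 hlaw
    fun k ↦ ∫ x in (0:ℝ)..(1 + k), φ x
  simp only [smul_eq_mul] at hE
  rw [← hE] at hlower hupper
  refine ⟨by linarith, by linarith, by linarith, by linarith⟩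
end

section
/- Let X be a positive random variable with a = E[X] > 0 and Var(X) ≤ a². Then for every γ ∈ [0,1], Var(X^γ) ≤ 2 a^{2γ} · (Var(X)/a²). -/
/-!
Writing `x = a u`, the bound `|x ^ γ - a ^ γ| ≤ a ^ (γ - 1) |x - a|` reduces to
`|u ^ γ - 1| ≤ |u - 1|`, which holds because `u ^ γ` lies between `1` and `u`. As the variance
of `Y` is at most the mean square deviation of `Y` from any constant, the constant `a ^ γ`
gives `Var(X ^ γ) ≤ a ^ (2γ - 2) Var(X)`.
-/

open MeasureTheory ProbabilityTheory

namespace Real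

lemma abs_rpow_sub_one_le_abs_sub_one {u γ : ℝ} (hu : 0 ≤ u) (hγ0 : 0 ≤ γ) (hγ1 : γ ≤ 1) :
    |u ^ γ - 1| ≤ |u - 1| := by
  rcases le_total u 1 with hu1 | hu1
  · have h_le_one : u ^ γ ≤ 1 := rpow_le_one hu hu1 hγ0
    have h_ge_self : u ≤ u ^ γ := by
      simpa using rpow_le_rpow_of_exponent_ge' hu hu1 hγ0 hγ1
    rw [abs_of_nonpos (by linarith), abs_of_nonpos (by linarith)]
    linarith
  · have h_one_le : 1 ≤ u ^ γ := one_le_rpow hu1 hγ0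
    have h_le_self : u ^ γ ≤ u := by
      simpa using rpow_le_rpow_of_exponent_le hu1 hγ1
    rw [abs_of_nonneg (by linarith), abs_of_nonneg (by linarith)]
    linarith

lemma abs_rpow_sub_rpow_le {a x γ : ℝ} (ha : 0 < a) (hx : 0 ≤ x) (hγ0 : 0 ≤ γ) (hγ1 : γ ≤ 1) :
    |x ^ γ - a ^ γ| ≤ a ^ (γ - 1) * |x - a| := by
  have haγ : 0 < a ^ γ := rpow_pos_of_pos ha γ
  have h := abs_rpow_sub_one_le_abs_sub_one (div_nonneg hx ha.le) hγ0 hγ1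
  rw [div_rpow hx ha.le, div_sub_one haγ.ne', div_sub_one ha.ne', abs_div, abs_div,
    abs_of_pos haγ, abs_of_pos ha, div_le_div_iff₀ haγ ha] at h
  rw [rpow_sub ha, rpow_one, div_mul_eq_mul_div, le_div_iff₀ ha]
  linarith

end Real

namespace ProbabilityTheory

variable {Ω : Type*} [MeasurableSpace Ω] {μ : Measure Ω} [IsProbabilityMeasure μ]

lemma variance_le_integral_sub_sq {Y : Ω → ℝ} (hY : AEStronglyMeasurable Y μ) (c : ℝ) :
    variance Y μ ≤ ∫ ω, (Y ω - c) ^ 2 ∂μ := by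
  rw [← variance_sub_const hY c]
  exact variance_le_expectation_sq (hY.sub aestronglyMeasurable_const)

lemma variance_le_sq_mul_variance_of_abs_sub_le {X Y : Ω → ℝ} (hX : MemLp X 2 μ)
    (hY : AEStronglyMeasurable Y μ) {c L : ℝ}
    (h : ∀ᵐ ω ∂μ, |Y ω - c| ≤ L * |X ω - μ[X]|) :
    variance Y μ ≤ L ^ 2 * variance X μ := by
  have h_int : Integrable (fun ω => (X ω - μ[X]) ^ 2) μ :=
    (hX.sub (memLp_const _)).integrable_sq
  calc variance Y μ ≤ ∫ ω, (Y ω - c) ^ 2 ∂μ := variance_le_integral_sub_sq hY c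
    _ ≤ ∫ ω, L ^ 2 * (X ω - μ[X]) ^ 2 ∂μ := by
      refine integral_mono_of_nonneg (ae_of_all _ fun ω => sq_nonneg _)
        (h_int.const_mul _) ?_
      filter_upwards [h] with ω hω
      rw [← mul_pow, ← sq_abs (Y ω - c), ← sq_abs (L * _), abs_mul]
      exact pow_le_pow_left₀ (abs_nonneg _)
        (hω.trans (mul_le_mul_of_nonneg_right (le_abs_self L) (abs_nonneg _))) 2
    _ = L ^ 2 * variance X μ := by
      rw [integral_const_mul, variance_eq_integral hX.aestronglyMeasurable.aemeasurable]

end ProbabilityTheory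

open Real

theorem stmt2_general {Ω : Type*} [MeasurableSpace Ω] (μ : Measure Ω) [IsProbabilityMeasure μ]
    (X : Ω → ℝ) (hXpos : ∀ ω, 0 < X ω) (hX2 : MemLp X 2 μ)
    (a : ℝ) (ha : a = ∫ ω, X ω ∂μ) (ha0 : 0 < a)
    (γ : ℝ) (hγ0 : 0 ≤ γ) (hγ1 : γ ≤ 1) :
    variance (fun ω => X ω ^ γ) μ ≤ 2 * a ^ (2 * γ) * (variance X μ / a ^ 2) := by
  have h_meas : AEStronglyMeasurable (fun ω => X ω ^ γ) μ :=
    (continuous_rpow_const hγ0).comp_aestronglyMeasurable hX2.1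
  have h_var : variance (fun ω => X ω ^ γ) μ ≤ (a ^ (γ - 1)) ^ 2 * variance X μ :=
    variance_le_sq_mul_variance_of_abs_sub_le hX2 h_meas (c := a ^ γ) <| ae_of_all _ fun ω => by
      rw [← ha]; exact abs_rpow_sub_rpow_le ha0 (hXpos ω).le hγ0 hγ1
  have h_pow : (a ^ (γ - 1)) ^ 2 = a ^ (2 * γ) / a ^ 2 := by
    rw [← rpow_two, ← rpow_mul ha0.le, ← rpow_two, ← rpow_sub ha0]
    ring_nf
  have h_nonneg : 0 ≤ a ^ (2 * γ) * (variance X μ / a ^ 2) := by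
    have := variance_nonneg X μ
    positivity
  calc variance (fun ω => X ω ^ γ) μ ≤ a ^ (2 * γ) * (variance X μ / a ^ 2) := by
        exact h_var.trans_eq (by rw [h_pow]; ring)
    _ ≤ 2 * a ^ (2 * γ) * (variance X μ / a ^ 2) := by linarith

/-- Let `X` be a positive random variable with mean `a > 0` and `Var(X) ≤ a²`. Then for
every `γ ∈ [0,1]`, `Var(X^γ) ≤ 2 a^(2γ) (Var(X)/a²)`. -/
theorem stmt2 {Ω : Type*} [MeasurableSpace Ω] (μ : Measure Ω) [IsProbabilityMeasure μ]
    (X : Ω → ℝ) (hXpos : ∀ ω, 0 < X ω) (hX2 : MemLp X 2 μ)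
    (a : ℝ) (ha : a = ∫ ω, X ω ∂μ) (ha0 : 0 < a)
    (hvar : variance X μ ≤ a ^ 2)
    (γ : ℝ) (hγ0 : 0 ≤ γ) (hγ1 : γ ≤ 1) :
    variance (fun ω => X ω ^ γ) μ ≤ 2 * a ^ (2 * γ) * (variance X μ / a ^ 2) :=
  stmt2_general μ X hXpos hX2 a ha ha0 γ hγ0 hγ1
end

section
/- Let f, g : [0, A+2ε] → [0,∞) be non-decreasing right-continuous functions with f(0)=g(0)=0, f(A) ≥ B, g(A) ≥ B, for constants A, B > 0. Suppose there exist ε, δ > 0 such that g(t+ε) ≥ g(t) + δ for all t ∈ [0, A+ε], and sup_{t ∈ [0, A+2ε]} |f(t) − g(t)| ≤ δ/2. Then the generalized inverses f⁻¹(t) = inf{x : f(x) ≥ t} and g⁻¹(t) = inf{x : g(x) ≥ t} satisfy sup_{t ∈ [0,B]} |f⁻¹(t) − g⁻¹(t)| ≤ 2ε. -/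
lemma inv_spec_aux (a b t : ℝ) (h : ℝ → ℝ) (ha0 : 0 ≤ a) (hab : a < b)
    (hm : MonotoneOn h (Set.Icc 0 b))
    (hrc : ∀ s ∈ Set.Icc (0:ℝ) b, ContinuousWithinAt h (Set.Ici s) s)
    (hta : t ≤ h a) :
    0 ≤ sInf {x | x ∈ Set.Icc (0:ℝ) b ∧ t ≤ h x} ∧
    sInf {x | x ∈ Set.Icc (0:ℝ) b ∧ t ≤ h x} ≤ a ∧
    t ≤ h (sInf {x | x ∈ Set.Icc (0:ℝ) b ∧ t ≤ h x}) := by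
  set S := {x | x ∈ Set.Icc (0:ℝ) b ∧ t ≤ h x} with hS
  have haS : a ∈ S := ⟨⟨ha0, hab.le⟩, hta⟩
  have hbdd : BddBelow S := ⟨0, fun x hx => hx.1.1⟩
  have hm0 : 0 ≤ sInf S := le_csInf ⟨a, haS⟩ (fun x hx => hx.1.1)
  have hma : sInf S ≤ a := csInf_le hbdd haS
  refine ⟨hm0, hma, ?_⟩
  have hmb : sInf S < b := lt_of_le_of_lt hma hab
  have key : ∀ y ∈ Set.Ioc (sInf S) b, t ≤ h y := by
    intro y hy
    obtain ⟨x, hxS, hxy⟩ := exists_lt_of_csInf_lt ⟨a, haS⟩ hy.1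
    exact hxS.2.trans (hm hxS.1 ⟨le_of_lt (lt_of_le_of_lt hm0 hy.1), hy.2⟩ hxy.le)
  have t2 : Filter.Tendsto h (nhdsWithin (sInf S) (Set.Ioi (sInf S))) (nhds (h (sInf S))) :=
    (hrc (sInf S) ⟨hm0, hmb.le⟩).mono_left (nhdsWithin_mono _ Set.Ioi_subset_Ici_self)
  have hev : ∀ᶠ y in nhdsWithin (sInf S) (Set.Ioi (sInf S)), t ≤ h y := by
    filter_upwards [Ioc_mem_nhdsGT_of_mem ⟨le_refl _, hmb⟩] using key
  exact ge_of_tendsto t2 hev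

/-- Stability of generalized inverses: if `f, g` are non-decreasing right-continuous
nonnegative functions on `[0, A+2ε]` vanishing at `0` with `f(A), g(A) ≥ B`, if
`g(t+ε) ≥ g(t) + δ` on `[0, A+ε]` and `|f - g| ≤ δ/2` on `[0, A+2ε]`, then the
generalized inverses satisfy `|f⁻¹(t) - g⁻¹(t)| ≤ 2ε` for all `t ∈ [0, B]`. -/
theorem stmt15 (A B ε δ : ℝ) (hA : 0 < A) (hB : 0 < B) (hε : 0 < ε) (hδ : 0 < δ)
    (f g : ℝ → ℝ)
    (hfm : MonotoneOn f (Set.Icc 0 (A + 2*ε)))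
    (hgm : MonotoneOn g (Set.Icc 0 (A + 2*ε)))
    (hf0 : f 0 = 0) (hg0 : g 0 = 0)
    (hfnn : ∀ t ∈ Set.Icc (0:ℝ) (A + 2*ε), 0 ≤ f t)
    (hgnn : ∀ t ∈ Set.Icc (0:ℝ) (A + 2*ε), 0 ≤ g t)
    (hfrc : ∀ t ∈ Set.Icc (0:ℝ) (A + 2*ε), ContinuousWithinAt f (Set.Ici t) t)
    (hgrc : ∀ t ∈ Set.Icc (0:ℝ) (A + 2*ε), ContinuousWithinAt g (Set.Ici t) t)
    (hfA : B ≤ f A) (hgA : B ≤ g A)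
    (hgrow : ∀ t ∈ Set.Icc (0:ℝ) (A + ε), g t + δ ≤ g (t + ε))
    (hclose : ∀ t ∈ Set.Icc (0:ℝ) (A + 2*ε), |f t - g t| ≤ δ/2) :
    ∀ t ∈ Set.Icc (0:ℝ) B,
      |sInf {x | x ∈ Set.Icc (0:ℝ) (A + 2*ε) ∧ t ≤ f x}
        - sInf {x | x ∈ Set.Icc (0:ℝ) (A + 2*ε) ∧ t ≤ g x}| ≤ 2*ε := by
  intro t ht
  have hab : A < A + 2*ε := by linarith
  obtain ⟨hf0', hfa, hfval⟩ :=
    inv_spec_aux A (A + 2*ε) t f hA.le hab hfm hfrc (ht.2.trans hfA)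
  obtain ⟨hg0', hga, hgval⟩ :=
    inv_spec_aux A (A + 2*ε) t g hA.le hab hgm hgrc (ht.2.trans hgA)
  set mf := sInf {x | x ∈ Set.Icc (0:ℝ) (A + 2*ε) ∧ t ≤ f x} with hmf
  set mg := sInf {x | x ∈ Set.Icc (0:ℝ) (A + 2*ε) ∧ t ≤ g x} with hmg
  -- f inverse ≤ mg + ε
  have h1 : mf ≤ mg + ε := by
    have hmem : mg + ε ∈ Set.Icc (0:ℝ) (A + 2*ε) := ⟨by linarith, by linarith⟩
    have hgrow' := hgrow mg ⟨hg0', by linarith⟩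
    have hclose' := hclose (mg + ε) hmem
    have : t ≤ f (mg + ε) := by
      have := abs_le.mp hclose'
      linarith [this.1, this.2]
    exact csInf_le ⟨0, fun x hx => hx.1.1⟩ ⟨hmem, this⟩
  -- g inverse ≤ mf + ε
  have h2 : mg ≤ mf + ε := by
    have hmem : mf + ε ∈ Set.Icc (0:ℝ) (A + 2*ε) := ⟨by linarith, by linarith⟩
    have hgrow' := hgrow mf ⟨hf0', by linarith⟩
    have hclose' := hclose mf ⟨hf0', by linarith⟩
    have : t ≤ g (mf + ε) := by
      have := abs_le.mp hclose'
      linarith [this.1, this.2]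
    exact csInf_le ⟨0, fun x hx => hx.1.1⟩ ⟨hmem, this⟩
  rw [abs_le]
  constructor <;> linarith
end

section
/- Let γ ∈ (0,1], C > 0 with 2C − 2^{1−γ} > 0. Let (N_i)_{i∈ℕ} be positive-integer-valued random variables and (A_n)_{n∈ℕ} random finite subsets of ℕ with A_n ⊆ A_{n+1} for all n and #A_n → ∞ with ∑_{i∈A_n}(N_i)^γ → ∞. Let (Z_{i,k}) be i.i.d. exponential(1) random variables independent of ((N_i),(A_n)). Then almost surely there exists m such that for all n ≥ m, ∑_{i∈A_n} (∑_{k=1}^{N_i} Z_{i,k})^γ ≥ c ∑_{i∈A_n} (N_i)^γ for a deterministic constant c > 0. -/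
/-!
Write `S_n = ∑_{i ∈ A_n} N_i^γ` and `a_i = N_i^(γ-1)`. Since `t ↦ t^(γ-1)` is non-increasing,
`a_i ∑_{k < N_i} min(Z_{i,k}, 1) ≤ (∑_{k < N_i} Z_{i,k})^γ`, and summing the left-hand sides
over `A_n` gives a sum `R_n`, non-decreasing in `n`, of independent bounded variables with mean
at least `P(Z ≥ 1) S_n = e⁻¹ S_n` and variance at most `S_n`. For a fixed realisation of
`(N, A)`, Chebyshev's inequality along the first times at which `S_n ≥ 2^j` and Borel–Cantelli
give `R_n ≥ e⁻¹ S_n / 2` at those times almost surely, hence `R_n ≥ e⁻¹ S_n / 4` for all large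
`n`. Independence of `Z` from `(N, A)` and Fubini pass from fixed to random environments.
-/

open MeasureTheory ProbabilityTheory Filter

theorem rpow_sub_one_mul_le_rpow {γ s n x : ℝ} (hγ0 : 0 ≤ γ) (hγ1 : γ ≤ 1) (hs : 0 ≤ s)
    (hsn : s ≤ n) (hsx : s ≤ x) : n ^ (γ - 1) * s ≤ x ^ γ := by
  rcases hs.eq_or_lt with rfl | hs
  · rw [mul_zero]
    exact Real.rpow_nonneg hsx γ
  calc n ^ (γ - 1) * s ≤ s ^ (γ - 1) * s :=
        mul_le_mul_of_nonneg_right (Real.rpow_le_rpow_of_nonpos hs hsn (by linarith)) hs.le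
    _ = s ^ γ := by rw [← Real.rpow_add_one hs.ne', sub_add_cancel]
    _ ≤ x ^ γ := Real.rpow_le_rpow hs.le hsx hγ0

theorem natCast_rpow_sub_one_mul_sum_min_one_le {γ : ℝ} (hγ0 : 0 ≤ γ) (hγ1 : γ ≤ 1) (n : ℕ)
    {z : ℕ → ℝ} (hz : ∀ k, 0 ≤ z k) :
    (n : ℝ) ^ (γ - 1) * ∑ k ∈ Finset.range n, min (z k) 1
      ≤ (∑ k ∈ Finset.range n, z k) ^ γ := by
  refine rpow_sub_one_mul_le_rpow hγ0 hγ1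
    (Finset.sum_nonneg fun k _ => le_min (hz k) zero_le_one) ?_
    (Finset.sum_le_sum fun k _ => min_le_left _ _)
  simpa using Finset.sum_le_sum fun k (_ : k ∈ Finset.range n) => min_le_right (z k) 1

theorem rpow_sub_one_mul_self {γ x : ℝ} (hγ : γ ≠ 0) (hx : 0 ≤ x) :
    x ^ (γ - 1) * x = x ^ γ := by
  rcases hx.eq_or_lt with rfl | hx
  · simp [Real.zero_rpow hγ]
  · rw [← Real.rpow_add_one hx.ne', sub_add_cancel]

theorem natCast_mul_rpow_sub_one_sq_le {γ : ℝ} (hγ0 : 0 < γ) (hγ1 : γ ≤ 1) (n : ℕ) :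
    n * ((n : ℝ) ^ (γ - 1)) ^ 2 ≤ (n : ℝ) ^ γ := by
  rcases n.eq_zero_or_pos with rfl | hn
  · simp [Real.zero_rpow hγ0.ne']
  have hle : (n : ℝ) ^ (γ - 1) ≤ 1 :=
    Real.rpow_le_one_of_one_le_of_nonpos (by exact_mod_cast hn) (by linarith)
  calc (n : ℝ) * ((n : ℝ) ^ (γ - 1)) ^ 2 = (n : ℝ) ^ γ * (n : ℝ) ^ (γ - 1) := by
        rw [← rpow_sub_one_mul_self hγ0.ne' n.cast_nonneg]; ring
    _ ≤ (n : ℝ) ^ γ := mul_le_of_le_one_right (by positivity) hle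

theorem exists_two_pow_le_lt {x : ℝ} {J : ℕ} (hx : (2 : ℝ) ^ J ≤ x) :
    ∃ j, J ≤ j ∧ (2 : ℝ) ^ j ≤ x ∧ x < 2 ^ (j + 1) := by
  have hJ : 2 ^ J ≤ ⌊x⌋₊ := Nat.le_floor (by exact_mod_cast hx)
  refine ⟨Nat.log 2 ⌊x⌋₊, Nat.le_log_of_pow_le one_lt_two hJ, ?_, ?_⟩
  · calc (2 : ℝ) ^ Nat.log 2 ⌊x⌋₊ ≤ ⌊x⌋₊ := by
          exact_mod_cast Nat.pow_log_le_self 2 (hJ.trans_lt' (by positivity)).ne'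
      _ ≤ x := Nat.floor_le (hx.trans' (by positivity))
  · calc x < ⌊x⌋₊ + 1 := Nat.lt_floor_add_one x
      _ ≤ 2 ^ (Nat.log 2 ⌊x⌋₊ + 1) := by
          exact_mod_cast Nat.lt_pow_succ_log_self one_lt_two _

section Probability

variable {Ω : Type*} [MeasurableSpace Ω] {μ : Measure Ω}

theorem meas_ge_mul_le_of_variance_le [IsFiniteMeasure μ] {X : Ω → ℝ} (hX : MemLp X 2 μ)
    {c s : ℝ} (hc : 0 < c) (hs : 0 < s) (hvar : variance X μ ≤ s) :
    μ {ω | c * s ≤ |X ω - μ[X]|} ≤ ENNReal.ofReal (1 / (c ^ 2 * s)) := by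
  refine (meas_ge_le_variance_div_sq hX (by positivity)).trans (ENNReal.ofReal_le_ofReal ?_)
  calc variance X μ / (c * s) ^ 2 ≤ s / (c * s) ^ 2 := by gcongr
    _ = 1 / (c ^ 2 * s) := by field_simp

theorem ae_eventually_mul_le_of_variance_le [IsFiniteMeasure μ] {R : ℕ → Ω → ℝ} {S : ℕ → ℝ}
    {δ : ℝ} (hδ : 0 < δ) (hR : ∀ ω, Monotone (R · ω)) (hRL2 : ∀ n, MemLp (R n) 2 μ)
    (hS : Monotone S) (hS_top : Tendsto S atTop atTop) (hmean : ∀ n, δ * S n ≤ μ[R n])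
    (hvar : ∀ n, variance (R n) μ ≤ S n) :
    ∀ᵐ ω ∂μ, ∀ᶠ n in atTop, δ / 4 * S n ≤ R n ω := by
  have hex : ∀ j : ℕ, ∃ n, (2 : ℝ) ^ j ≤ S n := fun j => (hS_top.eventually_ge_atTop _).exists
  set t : ℕ → ℕ := fun j => Nat.find (hex j)
  have ht : ∀ j, (2 : ℝ) ^ j ≤ S (t j) := fun j => Nat.find_spec (hex j)
  have hbad : ∀ j, μ {ω | δ / 2 * S (t j) ≤ |R (t j) ω - μ[R (t j)]|}
      ≤ ENNReal.ofReal (4 / δ ^ 2 * (1 / 2) ^ j) := by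
    intro j
    have hSpos : 0 < S (t j) := (ht j).trans_lt' (by positivity)
    refine (meas_ge_mul_le_of_variance_le (hRL2 _) (by positivity) hSpos (hvar _)).trans
      (ENNReal.ofReal_le_ofReal ?_)
    calc 1 / ((δ / 2) ^ 2 * S (t j)) ≤ 1 / ((δ / 2) ^ 2 * 2 ^ j) := by gcongr; exact ht j
      _ = 4 / δ ^ 2 * (1 / 2) ^ j := by rw [one_div_pow]; field_simp; norm_num
  have hsum : ∑' j, μ {ω | δ / 2 * S (t j) ≤ |R (t j) ω - μ[R (t j)]|} ≠ ⊤ :=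
    ne_top_of_le_ne_top (by
      rw [← ENNReal.ofReal_tsum_of_nonneg (fun j => by positivity)
        (summable_geometric_two.mul_left _)]
      exact ENNReal.ofReal_ne_top) (ENNReal.tsum_le_tsum hbad)
  filter_upwards [ae_eventually_notMem hsum] with ω hω
  obtain ⟨J, hJ⟩ := eventually_atTop.1 hω
  filter_upwards [eventually_ge_atTop (t J)] with n hn
  obtain ⟨j, hJj, hj, hj1⟩ := exists_two_pow_le_lt ((ht J).trans (hS hn))
  have hgood : |R (t j) ω - μ[R (t j)]| < δ / 2 * S (t j) := not_le.1 (hJ j hJj)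
  have htn : t j ≤ n := Nat.find_min' (hex j) hj
  calc δ / 4 * S n ≤ δ / 2 * 2 ^ j := by rw [pow_succ] at hj1; nlinarith
    _ ≤ δ / 2 * S (t j) := by gcongr; exact ht j
    _ ≤ R (t j) ω := by linarith [hmean (t j), (abs_lt.1 hgood).1]
    _ ≤ R n ω := hR ω htn

theorem variance_sum_sum_of_iIndepFun {ι κ : Type*} {X : ι × κ → Ω → ℝ} (hX : iIndepFun X μ)
    (hL2 : ∀ p, MemLp (X p) 2 μ) (s : Finset ι) (t : ι → Finset κ) :
    variance (fun ω => ∑ i ∈ s, ∑ k ∈ t i, X (i, k) ω) μ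
      = ∑ i ∈ s, ∑ k ∈ t i, variance (X (i, k)) μ := by
  simp_rw [Finset.sum_sigma']
  rw [← IndepFun.variance_sum (X := fun x : (_ : ι) × κ => X (x.1, x.2)) (fun x _ => hL2 _)
    fun x _ y _ hxy => hX.indepFun ((Equiv.sigmaEquivProd ι κ).injective.ne hxy)]
  simp only [Finset.sum_fn]

theorem measureReal_le_integral_min_one [IsFiniteMeasure μ] {Z : Ω → ℝ} (hZm : Measurable Z)
    (hZnn : ∀ ω, 0 ≤ Z ω) : μ.real {ω | 1 ≤ Z ω} ≤ ∫ ω, min (Z ω) 1 ∂μ := by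
  have hmeas : MeasurableSet {ω | 1 ≤ Z ω} := measurableSet_le measurable_const hZm
  rw [← integral_indicator_one hmeas]
  refine integral_mono ((integrable_const (1 : ℝ)).indicator hmeas) ?_ fun ω => ?_
  · exact (integrable_const (1 : ℝ)).mono (hZm.min measurable_const).aestronglyMeasurable
      (ae_of_all _ fun ω => by simp [abs_of_nonneg (le_min (hZnn ω) zero_le_one)])
  · by_cases h : 1 ≤ Z ω <;> simp [h, hZnn ω]

theorem memLp_min_one [IsFiniteMeasure μ] {Z : Ω → ℝ} (hZm : Measurable Z)
    (hZnn : ∀ ω, 0 ≤ Z ω) : MemLp (fun ω => min (Z ω) 1) 2 μ :=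
  memLp_of_bounded (ae_of_all _ fun ω => ⟨le_min (hZnn ω) zero_le_one, min_le_right _ _⟩)
    (hZm.min measurable_const).aestronglyMeasurable 2

theorem ae_mem_of_indepFun {X Y : Type*} [MeasurableSpace X] [MeasurableSpace Y]
    [IsFiniteMeasure μ] {ξ : Ω → X} {ζ : Ω → Y}
    (hξ : Measurable ξ) (hζ : Measurable ζ) (hind : IndepFun ξ ζ μ) {G : Set (X × Y)}
    (hG : MeasurableSet G) (h : ∀ᵐ ω ∂μ, ∀ᵐ ω' ∂μ, (ξ ω, ζ ω') ∈ G) :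
    ∀ᵐ ω ∂μ, (ξ ω, ζ ω) ∈ G := by
  have hsec : MeasurableSet {x | ∀ᵐ y ∂μ.map ζ, (x, y) ∈ G} :=
    measurable_measure_prodMk_left hG.compl (measurableSet_singleton 0)
  refine ae_of_ae_map (hξ.prodMk hζ).aemeasurable ?_
  rw [(indepFun_iff_map_prod_eq_prod_map_map hξ.aemeasurable hζ.aemeasurable).1 hind,
    Measure.ae_prod_mem_iff_ae_ae_mem hG, ae_map_iff hξ.aemeasurable hsec]
  filter_upwards [h] with ω hω
  rwa [ae_map_iff hζ.aemeasurable (measurable_prodMk_left hG)]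

end Probability

section TruncatedSum

variable {Ω : Type*} {γ : ℝ} (N : ℕ → ℕ) {Z : ℕ × ℕ → Ω → ℝ}

noncomputable def truncatedSum (γ : ℝ) (Z : ℕ × ℕ → Ω → ℝ) (s : Finset ℕ) (ω : Ω) : ℝ :=
  ∑ i ∈ s, ∑ k ∈ Finset.range (N i), (N i : ℝ) ^ (γ - 1) * min (Z (i, k) ω) 1

theorem truncatedSum_le_sum_rpow_sum (hZnn : ∀ p ω, 0 ≤ Z p ω) (hγ0 : 0 ≤ γ) (hγ1 : γ ≤ 1)
    (s : Finset ℕ) (ω : Ω) :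
    truncatedSum N γ Z s ω ≤ ∑ i ∈ s, (∑ k ∈ Finset.range (N i), Z (i, k) ω) ^ γ :=
  Finset.sum_le_sum fun i _ => by
    rw [← Finset.mul_sum]
    exact natCast_rpow_sub_one_mul_sum_min_one_le hγ0 hγ1 _ fun k => hZnn _ ω

theorem truncatedSum_mono (hZnn : ∀ p ω, 0 ≤ Z p ω) {s t : Finset ℕ} (hst : s ⊆ t) (ω : Ω) :
    truncatedSum N γ Z s ω ≤ truncatedSum N γ Z t ω :=
  Finset.sum_le_sum_of_subset_of_nonneg hst fun i _ _ => Finset.sum_nonneg fun k _ =>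
    mul_nonneg (by positivity) (le_min (hZnn _ ω) zero_le_one)

variable [MeasurableSpace Ω] {μ : Measure Ω}

theorem memLp_truncatedSum [IsFiniteMeasure μ] (hZnn : ∀ p ω, 0 ≤ Z p ω)
    (hZm : ∀ p, Measurable (Z p)) (s : Finset ℕ) :
    MemLp (truncatedSum N γ Z s) 2 μ :=
  memLp_finsetSum _ fun i _ => memLp_finsetSum _ fun k _ =>
    (memLp_min_one (hZm (i, k)) (hZnn _)).const_mul _

theorem mul_sum_rpow_le_integral_truncatedSum [IsFiniteMeasure μ] (hZnn : ∀ p ω, 0 ≤ Z p ω)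
    (hZm : ∀ p, Measurable (Z p)) (hγ0 : 0 < γ) {δ : ℝ}
    (hZ1 : ∀ p, δ ≤ μ.real {ω | 1 ≤ Z p ω}) (s : Finset ℕ) :
    δ * ∑ i ∈ s, (N i : ℝ) ^ γ ≤ μ[truncatedSum N γ Z s] := by
  have hint : ∀ p, Integrable (fun ω => min (Z p ω) 1) μ :=
    fun p => (memLp_min_one (hZm p) (hZnn p)).integrable one_le_two
  unfold truncatedSum
  rw [integral_finsetSum _ fun i _ => integrable_finsetSum _ fun k _ =>
    (hint _).const_mul _, Finset.mul_sum]
  refine Finset.sum_le_sum fun i _ => ?_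
  rw [integral_finsetSum _ fun k _ => (hint _).const_mul _]
  calc δ * (N i : ℝ) ^ γ = ∑ k ∈ Finset.range (N i), (N i : ℝ) ^ (γ - 1) * δ := by
        rw [Finset.sum_const, Finset.card_range, nsmul_eq_mul,
          ← rpow_sub_one_mul_self hγ0.ne' (N i).cast_nonneg]
        ring
    _ ≤ _ := Finset.sum_le_sum fun k _ => by
        rw [integral_const_mul]
        exact mul_le_mul_of_nonneg_left
          ((hZ1 _).trans (measureReal_le_integral_min_one (hZm _) (hZnn _))) (by positivity)

theorem variance_truncatedSum_le [IsProbabilityMeasure μ] (hZnn : ∀ p ω, 0 ≤ Z p ω)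
    (hZm : ∀ p, Measurable (Z p)) (hγ0 : 0 < γ) (hγ1 : γ ≤ 1) (hZ : iIndepFun Z μ)
    (s : Finset ℕ) :
    variance (truncatedSum N γ Z s) μ ≤ ∑ i ∈ s, (N i : ℝ) ^ γ := by
  set a : ℕ → ℝ := fun i => (N i : ℝ) ^ (γ - 1)
  have hind : iIndepFun (fun p ω => a p.1 * min (Z p ω) 1) μ :=
    hZ.comp _ fun p => (measurable_id.min measurable_const).const_mul (a p.1)
  unfold truncatedSum
  rw [variance_sum_sum_of_iIndepFun hind fun p => (memLp_min_one (hZm p) (hZnn p)).const_mul _]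
  refine Finset.sum_le_sum fun i _ => ?_
  calc ∑ k ∈ Finset.range (N i), variance (fun ω => a i * min (Z (i, k) ω) 1) μ
      ≤ ∑ k ∈ Finset.range (N i), a i ^ 2 := Finset.sum_le_sum fun k _ => by
        have hW := variance_le_sq_of_bounded (μ := μ)
          (ae_of_all _ fun ω => ⟨le_min (hZnn (i, k) ω) zero_le_one, min_le_right _ 1⟩)
          ((hZm (i, k)).min measurable_const).aemeasurable
        rw [variance_const_mul]
        nlinarith [sq_nonneg (a i)]
    _ ≤ (N i : ℝ) ^ γ := by
        rw [Finset.sum_const, Finset.card_range, nsmul_eq_mul]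
        exact natCast_mul_rpow_sub_one_sq_le hγ0 hγ1 _

theorem ae_eventually_mul_sum_rpow_le_sum_rpow_sum [IsProbabilityMeasure μ] {δ : ℝ}
    (hγ0 : 0 < γ) (hγ1 : γ ≤ 1) (hδ : 0 < δ) {A : ℕ → Finset ℕ} (hA : Monotone A)
    (hS : Tendsto (fun n => ∑ i ∈ A n, (N i : ℝ) ^ γ) atTop atTop)
    (hZnn : ∀ p ω, 0 ≤ Z p ω) (hZm : ∀ p, Measurable (Z p))
    (hZ1 : ∀ p, δ ≤ μ.real {ω | 1 ≤ Z p ω}) (hZ : iIndepFun Z μ) :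
    ∀ᵐ ω ∂μ, ∀ᶠ n in atTop, δ / 4 * ∑ i ∈ A n, (N i : ℝ) ^ γ
      ≤ ∑ i ∈ A n, (∑ k ∈ Finset.range (N i), Z (i, k) ω) ^ γ := by
  have key := ae_eventually_mul_le_of_variance_le hδ
    (fun ω m n hmn => truncatedSum_mono N hZnn (hA hmn) ω)
    (fun n => memLp_truncatedSum N hZnn hZm (A n))
    (fun m n hmn => Finset.sum_le_sum_of_subset_of_nonneg (hA hmn) fun i _ _ => by positivity)
    hS (fun n => mul_sum_rpow_le_integral_truncatedSum N hZnn hZm hγ0 hZ1 (A n))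
    (fun n => variance_truncatedSum_le N hZnn hZm hγ0 hγ1 hZ (A n))
  filter_upwards [key] with ω hω
  filter_upwards [hω] with n hn
  exact hn.trans (truncatedSum_le_sum_rpow_sum N hZnn hγ0.le hγ1 _ ω)

end TruncatedSum

-- Unlike `Finset.sum`, this is measurable in the indicator `b`: it encodes sums over the
-- random sets `A n`.
noncomputable def selectSum (b : ℕ → Bool) (f : ℕ → ℝ) : ℝ :=
  ∑' i, if b i then f i else 0

theorem selectSum_decide_mem (s : Finset ℕ) (f : ℕ → ℝ) :
    selectSum (fun i => decide (i ∈ s)) f = ∑ i ∈ s, f i := by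
  rw [selectSum, tsum_eq_sum (s := s) fun i hi => by simp [hi]]
  exact Finset.sum_congr rfl fun i hi => by simp [hi]

theorem Measurable.selectSum {α : Type*} [MeasurableSpace α] {b : α → ℕ → Bool}
    {f : α → ℕ → ℝ} (hb : ∀ i, Measurable (b · i)) (hf : ∀ i, Measurable (f · i)) :
    Measurable fun x => _root_.selectSum (b x) (f x) :=
  Measurable.tsum fun i =>
    Measurable.ite (hb i (measurableSet_singleton true)) (hf i) measurable_const

def lowerBoundSet (γ c : ℝ) : Set (((ℕ → ℕ) × (ℕ → ℕ → Bool)) × (ℕ × ℕ → ℝ)) :=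
  {p | ∃ m, ∀ n ≥ m, c * selectSum (p.1.2 n) (fun i => (p.1.1 i : ℝ) ^ γ)
    ≤ selectSum (p.1.2 n) (fun i => (∑ k ∈ Finset.range (p.1.1 i), p.2 (i, k)) ^ γ)}

theorem measurableSet_lowerBoundSet (γ c : ℝ) : MeasurableSet (lowerBoundSet γ c) := by
  have hb : ∀ n i, Measurable fun p : ((ℕ → ℕ) × (ℕ → ℕ → Bool)) × (ℕ × ℕ → ℝ) => p.1.2 n i :=
    fun n i => by fun_prop
  have hN : ∀ i, Measurable fun p : ((ℕ → ℕ) × (ℕ → ℕ → Bool)) × (ℕ × ℕ → ℝ) => p.1.1 i :=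
    fun i => by fun_prop
  have hsum : ∀ i, Measurable fun p : ((ℕ → ℕ) × (ℕ → ℕ → Bool)) × (ℕ × ℕ → ℝ) =>
      ∑ k ∈ Finset.range (p.1.1 i), p.2 (i, k) := fun i =>
    (measurable_from_prod_countable_left
      (f := fun q : (ℕ × ℕ → ℝ) × ℕ => ∑ k ∈ Finset.range q.2, q.1 (i, k)) fun m =>
      Finset.measurable_sum (Finset.range m) fun k _ => measurable_pi_apply (i, k)).comp
      (measurable_snd.prodMk (hN i))
  refine Measurable.setOf (Measurable.exists fun m => Measurable.forall fun n =>
    Measurable.imp measurable_const (measurableSet_setOfPred.1 (measurableSet_le ?_ ?_)))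
  · exact (Measurable.selectSum (hb n) fun i =>
      (measurable_from_top.comp (hN i)).pow_const γ).const_mul _
  · exact Measurable.selectSum (hb n) fun i => (hsum i).pow_const γ

theorem mem_lowerBoundSet_iff {γ c : ℝ} {N : ℕ → ℕ} {A : ℕ → Finset ℕ} {z : ℕ × ℕ → ℝ} :
    ((N, fun n i => decide (i ∈ A n)), z) ∈ lowerBoundSet γ c ↔
      ∃ m, ∀ n ≥ m, c * ∑ i ∈ A n, (N i : ℝ) ^ γ
        ≤ ∑ i ∈ A n, (∑ k ∈ Finset.range (N i), z (i, k)) ^ γ := by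
  simp only [lowerBoundSet, Set.mem_ofPred_eq, selectSum_decide_mem]

theorem stmt19_general {Ω : Type*} [MeasurableSpace Ω] (μ : Measure Ω) [IsProbabilityMeasure μ]
    (γ : ℝ) (hγ0 : 0 < γ) (hγ1 : γ ≤ 1)
    (N : ℕ → Ω → ℕ) (hNmeas : ∀ i, Measurable (N i))
    (A : ℕ → Ω → Finset ℕ)
    (hAmeas : ∀ n i, Measurable (fun ω => decide (i ∈ A n ω)))
    (hAmono : ∀ n ω, A n ω ⊆ A (n + 1) ω)
    (hAsum : ∀ ω, Tendsto (fun n => ∑ i ∈ A n ω, ((N i ω : ℝ)) ^ γ) atTop atTop)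
    (Z : ℕ → ℕ → Ω → ℝ) (hZmeas : ∀ i k, Measurable (Z i k))
    (hZnn : ∀ i k ω, 0 ≤ Z i k ω)
    (hZexp : ∀ i k (t : ℝ), 0 ≤ t →
      μ {ω | t ≤ Z i k ω} = ENNReal.ofReal (Real.exp (-t)))
    (hZindep : iIndepFun
      (fun ik : ℕ × ℕ => fun ω => Z ik.1 ik.2 ω) μ)
    (hindepNA : IndepFun
      (fun ω => ((fun i => N i ω), (fun n i => decide (i ∈ A n ω))))
      (fun ω => fun ik : ℕ × ℕ => Z ik.1 ik.2 ω) μ) :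
    ∃ c : ℝ, 0 < c ∧ ∀ᵐ ω ∂μ, ∃ m : ℕ, ∀ n ≥ m,
      c * ∑ i ∈ A n ω, ((N i ω : ℝ)) ^ γ
        ≤ ∑ i ∈ A n ω, (∑ k ∈ Finset.range (N i ω), Z i k ω) ^ γ := by
  set c := Real.exp (-1) / 4
  have hZ1 : ∀ ik : ℕ × ℕ, Real.exp (-1) ≤ μ.real {ω | 1 ≤ Z ik.1 ik.2 ω} := fun ik => by
    rw [measureReal_def, hZexp _ _ 1 zero_le_one, ENNReal.toReal_ofReal (Real.exp_pos _).le]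
  have hfixed : ∀ ω, ∀ᵐ ω' ∂μ, (((N · ω), fun n i => decide (i ∈ A n ω)),
      fun ik : ℕ × ℕ => Z ik.1 ik.2 ω') ∈ lowerBoundSet γ c := fun ω => by
    filter_upwards [ae_eventually_mul_sum_rpow_le_sum_rpow_sum (N · ω) hγ0 hγ1
      (Real.exp_pos (-1)) (monotone_nat_of_le_succ (hAmono · ω)) (hAsum ω)
      (fun ik => hZnn ik.1 ik.2) (fun ik => hZmeas ik.1 ik.2) hZ1 hZindep] with ω' hω'
    exact mem_lowerBoundSet_iff.2 (eventually_atTop.1 hω')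
  have hξ : Measurable fun ω => ((fun i => N i ω), fun n i => decide (i ∈ A n ω)) :=
    (measurable_pi_lambda _ hNmeas).prodMk
      (measurable_pi_lambda _ fun n => measurable_pi_lambda _ (hAmeas n))
  have hζ : Measurable fun ω (ik : ℕ × ℕ) => Z ik.1 ik.2 ω :=
    measurable_pi_lambda _ fun ik => hZmeas ik.1 ik.2
  refine ⟨c, by positivity, ?_⟩
  filter_upwards [ae_mem_of_indepFun hξ hζ hindepNA (measurableSet_lowerBoundSet γ c)
    (ae_of_all _ hfixed)] with ω hω
  exact mem_lowerBoundSet_iff.1 hω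

/-- Let `γ ∈ (0,1]` and `C > 0` with `2C - 2^(1-γ) > 0`. Let `(N_i)` be positive-integer
random variables and `(A_n)` random non-decreasing finite subsets of `ℕ` with
`#A_n → ∞` and `∑_{i∈A_n} N_i^γ → ∞`. Let `(Z_{i,k})` be i.i.d. exponential(1) random
variables independent of `((N_i),(A_n))`. Then there is a deterministic constant `c > 0`
such that almost surely, for all `n` large enough,
`∑_{i∈A_n} (∑_{k=1}^{N_i} Z_{i,k})^γ ≥ c ∑_{i∈A_n} N_i^γ`. -/
theorem stmt19 {Ω : Type*} [MeasurableSpace Ω] (μ : Measure Ω) [IsProbabilityMeasure μ]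
    (γ : ℝ) (hγ0 : 0 < γ) (hγ1 : γ ≤ 1)
    (C : ℝ) (hC0 : 0 < C) (hC : 0 < 2 * C - 2 ^ (1 - γ))
    (N : ℕ → Ω → ℕ) (hNpos : ∀ i ω, 1 ≤ N i ω) (hNmeas : ∀ i, Measurable (N i))
    (A : ℕ → Ω → Finset ℕ)
    (hAmeas : ∀ n i, Measurable (fun ω => decide (i ∈ A n ω)))
    (hAmono : ∀ n ω, A n ω ⊆ A (n + 1) ω)
    (hAcard : ∀ ω, Tendsto (fun n => (A n ω).card) atTop atTop)
    (hAsum : ∀ ω, Tendsto (fun n => ∑ i ∈ A n ω, ((N i ω : ℝ)) ^ γ) atTop atTop)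
    (Z : ℕ → ℕ → Ω → ℝ) (hZmeas : ∀ i k, Measurable (Z i k))
    (hZnn : ∀ i k ω, 0 ≤ Z i k ω)
    (hZexp : ∀ i k (t : ℝ), 0 ≤ t →
      μ {ω | t ≤ Z i k ω} = ENNReal.ofReal (Real.exp (-t)))
    (hZindep : iIndepFun
      (fun ik : ℕ × ℕ => fun ω => Z ik.1 ik.2 ω) μ)
    (hindepNA : IndepFun
      (fun ω => ((fun i => N i ω), (fun n i => decide (i ∈ A n ω))))
      (fun ω => fun ik : ℕ × ℕ => Z ik.1 ik.2 ω) μ) :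
    ∃ c : ℝ, 0 < c ∧ ∀ᵐ ω ∂μ, ∃ m : ℕ, ∀ n ≥ m,
      c * ∑ i ∈ A n ω, ((N i ω : ℝ)) ^ γ
        ≤ ∑ i ∈ A n ω, (∑ k ∈ Finset.range (N i ω), Z i k ω) ^ γ :=
  stmt19_general μ γ hγ0 hγ1 N hNmeas A hAmeas hAmono hAsum Z hZmeas hZnn hZexp hZindep hindepNA
end
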